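/- Let N = hk and define u on ℝ^N by u e_j = e_l/√k for j in the l-th block A_l of a partition of {1,…,N} into h blocks of size k each. Then ‖u‖ = 1 and the squared Hilbert–Schmidt norm of u equals h. Moreover, for any diagonal operator Δ on ℝ^N of rank at most n, ‖u(id − Δ)‖ ≥ √((N−n)/N). -/

import Mathlib

/-!
The `l`-th coordinate of `u x` is `k^{-1/2} ∑_{j ∈ A_l} x_j`, so Cauchy–Schwarz on each block
gives `‖u‖ ≤ 1`, with equality at the indicator of a block. For the lower bound, `d` vanishes on at
least `N - n` coordinates, so by pigeonhole some block `A_l` contains `m ≥ (N - n)/h` of them. Their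
indicator `y` is fixed by `id - Δ` and `u y = (m/√k) e_l` while `‖y‖ = √m`, hence
`‖u (id - Δ)‖ ≥ √(m/k) ≥ √((N - n)/N)`.
-/

open Finset

section FiberOperator

variable {ι κ : Type*} [DecidableEq ι] [DecidableEq κ]
  {u : EuclideanSpace ℝ ι →L[ℝ] EuclideanSpace ℝ κ} {f : ι → κ} {c : ℝ}

lemma map_sum_single_of_mapsTo
    (hu : ∀ j, u (EuclideanSpace.single j 1) = c • EuclideanSpace.single (f j) 1)
    {s : Finset ι} {l : κ} (hs : ∀ j ∈ s, f j = l) :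
    u (∑ j ∈ s, EuclideanSpace.single j 1) = (c * #s) • EuclideanSpace.single l 1 := by
  rw [map_sum, Finset.sum_congr rfl fun j hj => by rw [hu, hs j hj], sum_const,
    ← Nat.cast_smul_eq_nsmul ℝ, smul_smul, mul_comm]

variable [Fintype ι]

lemma norm_sum_single_one (s : Finset ι) :
    ‖∑ j ∈ s, EuclideanSpace.single j (1 : ℝ)‖ = √(#s) := by
  rw [EuclideanSpace.norm_eq]
  congr 1
  simp [WithLp.ofLp_sum, Finset.sum_apply]

lemma apply_eq_mul_sum_fiber
    (hu : ∀ j, u (EuclideanSpace.single j 1) = c • EuclideanSpace.single (f j) 1)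
    (x : EuclideanSpace ℝ ι) (i : κ) :
    u x i = c * ∑ j with f j = i, x j := by
  conv_lhs => rw [← (EuclideanSpace.basisFun ι ℝ).sum_repr x]
  simp only [map_sum, map_smul, hu, WithLp.ofLp_sum, Finset.sum_apply, PiLp.smul_apply,
    EuclideanSpace.basisFun_repr, EuclideanSpace.basisFun_apply, PiLp.single_apply, smul_eq_mul,
    Finset.sum_filter, Finset.mul_sum]
  refine sum_congr rfl fun j _ => ?_
  by_cases hj : f j = i <;> simp [hj, Ne.symm, mul_comm]

variable [Fintype κ]

lemma norm_apply_le_of_card_fiber_le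
    (hu : ∀ j, u (EuclideanSpace.single j 1) = c • EuclideanSpace.single (f j) 1)
    {m : ℕ} (hm : ∀ i, #{j | f j = i} ≤ m) (x : EuclideanSpace ℝ ι) :
    ‖u x‖ ≤ |c| * √m * ‖x‖ := by
  have hsq : ‖u x‖ ^ 2 ≤ (|c| * √m * ‖x‖) ^ 2 := calc
    ‖u x‖ ^ 2 = ∑ i, c ^ 2 * (∑ j with f j = i, x j) ^ 2 := by
      simp [EuclideanSpace.norm_sq_eq, apply_eq_mul_sum_fiber hu, mul_pow]
    _ ≤ ∑ i, c ^ 2 * (m * ∑ j with f j = i, x j ^ 2) := by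
      gcongr with i
      exact sq_sum_le_card_mul_sum_sq.trans (by gcongr; exact_mod_cast hm i)
    _ = c ^ 2 * m * ∑ j, x j ^ 2 := by
      rw [← Finset.sum_fiberwise univ f]
      simp [mul_sum, mul_assoc]
    _ = (|c| * √m * ‖x‖) ^ 2 := by
      rw [mul_pow, mul_pow, sq_abs, Real.sq_sqrt (by positivity), EuclideanSpace.norm_sq_eq]
      simp
  exact (pow_le_pow_iff_left₀ (norm_nonneg _) (by positivity) two_ne_zero).1 hsq

lemma opNorm_le_of_card_fiber_le
    (hu : ∀ j, u (EuclideanSpace.single j 1) = c • EuclideanSpace.single (f j) 1)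
    {m : ℕ} (hm : ∀ i, #{j | f j = i} ≤ m) :
    ‖u‖ ≤ |c| * √m :=
  u.opNorm_le_bound (by positivity) (norm_apply_le_of_card_fiber_le hu hm)

lemma abs_mul_sqrt_card_le_opNorm_comp
    (hu : ∀ j, u (EuclideanSpace.single j 1) = c • EuclideanSpace.single (f j) 1)
    {s : Finset ι} {l : κ} (hs : ∀ j ∈ s, f j = l)
    {P : EuclideanSpace ℝ ι →L[ℝ] EuclideanSpace ℝ ι}
    (hP : ∀ j ∈ s, P (EuclideanSpace.single j 1) = EuclideanSpace.single j 1) :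
    |c| * √(#s) ≤ ‖u.comp P‖ := by
  rcases Nat.eq_zero_or_pos #s with hs0 | hs0
  · simp [hs0]
  have hfix : P (∑ j ∈ s, EuclideanSpace.single j 1) = ∑ j ∈ s, EuclideanSpace.single j 1 := by
    rw [map_sum]
    exact sum_congr rfl hP
  have hle := (u.comp P).le_opNorm (∑ j ∈ s, EuclideanSpace.single j 1)
  rw [ContinuousLinearMap.comp_apply, hfix, map_sum_single_of_mapsTo hu hs, norm_smul,
    PiLp.norm_single, norm_one, mul_one, norm_sum_single_one, Real.norm_eq_abs, abs_mul,
    Nat.abs_cast] at hle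
  have hle' : |c| * √(#s) * √(#s) ≤ ‖u.comp P‖ * √(#s) := by
    rwa [mul_assoc, Real.mul_self_sqrt (Nat.cast_nonneg _)]
  exact le_of_mul_le_mul_right hle' (Real.sqrt_pos.2 (Nat.cast_pos.2 hs0))

end FiberOperator

section Diagonal

variable {ι : Type*} [Fintype ι]

lemma sub_card_le_card_filter_eq_zero {M : Type*} [Zero M] [DecidableEq M] (d : ι → M) {n : ℕ}
    (hn : {j | d j ≠ 0}.ncard ≤ n) :
    (Fintype.card ι : ℝ) - n ≤ #{j | d j = 0} := by
  have hsplit : #{j | d j = 0} + #{j | ¬d j = 0} = Fintype.card ι :=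
    card_filter_add_card_filter_not _
  have hsupp : {j | d j ≠ 0}.ncard = #{j | ¬d j = 0} := by
    rw [← Set.ncard_coe_finset]
    simp
  have : (#{j | ¬d j = 0} : ℝ) ≤ n := by exact_mod_cast hsupp ▸ hn
  rw [← hsplit]
  push_cast
  linarith

variable [DecidableEq ι]

lemma id_sub_apply_single_of_eq_zero {Δ : EuclideanSpace ℝ ι →L[ℝ] EuclideanSpace ℝ ι}
    {d : ι → ℝ} (hΔ : ∀ z j, Δ z j = d j * z j) {j : ι} (hj : d j = 0) :
    (ContinuousLinearMap.id ℝ (EuclideanSpace ℝ ι) - Δ) (EuclideanSpace.single j 1) =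
      EuclideanSpace.single j 1 := by
  ext i
  by_cases hij : i = j <;> simp [hΔ, hij, hj]

end Diagonal

section Blocks

variable {N : ℕ}

/-- The blocks are `A_l = {lk, …, lk + k - 1}`, labelled by `l < h` viewed inside `Fin N`. -/
def blockIdx (k : ℕ) (j : Fin N) : Fin N :=
  ⟨j / k, (Nat.div_le_self _ _).trans_lt j.isLt⟩

lemma card_blockIdx_fiber_le {k : ℕ} (hk : 0 < k) (l : Fin N) :
    #{j | blockIdx k j = l} ≤ k := calc
  #{j | blockIdx k j = l} ≤ #(Ico (l * k : ℕ) (l * k + k)) := by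
    refine card_le_card_of_injOn Fin.val (fun j hj => ?_) Fin.val_injective.injOn
    have hjl : (j : ℕ) / k = l := congrArg Fin.val (mem_filter.1 hj).2
    rw [Nat.div_eq_iff hk] at hjl
    simp only [coe_Ico, Set.mem_Ico]
    omega
  _ = k := by simp

lemma blockIdx_lt {h k : ℕ} (hN : N = h * k) (j : Fin N) : (blockIdx k j : ℕ) < h :=
  Nat.div_lt_of_lt_mul (mul_comm h k ▸ hN ▸ j.isLt)

lemma exists_card_blockIdx_fiber_ge {h k : ℕ} (hh : 0 < h) (hk : 0 < k) (hN : N = h * k)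
    (Z : Finset (Fin N)) : ∃ l, (#Z : ℝ) / h ≤ #{j ∈ Z | blockIdx k j = l} := by
  have hhN : h ≤ N := hN ▸ Nat.le_mul_of_pos_right h hk
  have hblocks : #{l : Fin N | (l : ℕ) < h} = h := by
    rw [Fin.card_filter_val_lt, min_eq_right hhN]
  obtain ⟨l, -, hl⟩ := exists_le_card_fiber_of_nsmul_le_card_of_maps_to
    (s := Z) (t := {l : Fin N | (l : ℕ) < h}) (f := blockIdx k) (b := (#Z : ℝ) / h)
    (fun j _ => mem_filter.2 ⟨mem_univ _, blockIdx_lt hN j⟩)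
    ⟨⟨0, hh.trans_le hhN⟩, mem_filter.2 ⟨mem_univ _, hh⟩⟩
    (by rw [hblocks, nsmul_eq_mul, mul_div_cancel₀ _ (by positivity)])
  exact ⟨l, hl⟩

variable {h k : ℕ} {u : EuclideanSpace ℝ (Fin N) →L[ℝ] EuclideanSpace ℝ (Fin N)}

lemma opNorm_eq_one_of_blockIdx (hh : 0 < h) (hk : 0 < k) (hN : N = h * k)
    (hu : ∀ j, u (EuclideanSpace.single j 1) = (1 / √k) • EuclideanSpace.single (blockIdx k j) 1) :
    ‖u‖ = 1 := by
  have hc : |1 / √(k : ℝ)| = 1 / √k := abs_of_pos (by positivity)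
  have hck : 1 / √(k : ℝ) * √k = 1 := one_div_mul_cancel (by positivity)
  refine le_antisymm ?_ ?_
  · rw [← hck, ← hc]
    exact opNorm_le_of_card_fiber_le hu (card_blockIdx_fiber_le hk)
  · have hkN : k ≤ N := hN ▸ Nat.le_mul_of_pos_left k hh
    have hfirst : #{j : Fin N | (j : ℕ) < k} = k := by
      rw [Fin.card_filter_val_lt, min_eq_right hkN]
    have hlow := abs_mul_sqrt_card_le_opNorm_comp hu (s := {j : Fin N | (j : ℕ) < k})
      (l := ⟨0, hk.trans_le hkN⟩) (fun j hj => Fin.ext (Nat.div_eq_of_lt (mem_filter.1 hj).2))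
      (P := ContinuousLinearMap.id ℝ _) fun _ _ => rfl
    rwa [hfirst, hc, hck, ContinuousLinearMap.comp_id] at hlow

lemma sum_norm_sq_single_of_blockIdx (hk : 0 < k) (hN : N = h * k)
    (hu : ∀ j, u (EuclideanSpace.single j 1) = (1 / √k) • EuclideanSpace.single (blockIdx k j) 1) :
    ∑ j, ‖u (EuclideanSpace.single j 1)‖ ^ 2 = h := calc
  ∑ j, ‖u (EuclideanSpace.single j 1)‖ ^ 2 = ∑ _j : Fin N, 1 / (k : ℝ) := by
    simp [hu, norm_smul, Real.sq_sqrt (Nat.cast_nonneg k)]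
  _ = h := by
    rw [sum_const, card_univ, Fintype.card_fin, nsmul_eq_mul, hN]
    push_cast
    field_simp

lemma sqrt_le_opNorm_comp_id_sub_diagonal_of_blockIdx (hh : 0 < h) (hk : 0 < k)
    (hN : N = h * k)
    (hu : ∀ j, u (EuclideanSpace.single j 1) = (1 / √k) • EuclideanSpace.single (blockIdx k j) 1)
    {n : ℕ} {Δ : EuclideanSpace ℝ (Fin N) →L[ℝ] EuclideanSpace ℝ (Fin N)} {d : Fin N → ℝ}
    (hΔ : ∀ z j, Δ z j = d j * z j) (hn : {j | d j ≠ 0}.ncard ≤ n) :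
    √(((N : ℝ) - n) / N) ≤ ‖u.comp (ContinuousLinearMap.id ℝ _ - Δ)‖ := by
  have hZ := sub_card_le_card_filter_eq_zero d hn
  rw [Fintype.card_fin] at hZ
  obtain ⟨l, hl⟩ := exists_card_blockIdx_fiber_ge hh hk hN {j | d j = 0}
  refine le_trans ?_ (abs_mul_sqrt_card_le_opNorm_comp hu
    (s := {j ∈ {j | d j = 0} | blockIdx k j = l}) (fun j hj => (mem_filter.1 hj).2)
    fun j hj => id_sub_apply_single_of_eq_zero hΔ (mem_filter.1 (mem_filter.1 hj).1).2)
  have hkR : (0 : ℝ) ≤ k := Nat.cast_nonneg k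
  rw [abs_of_pos (by positivity), one_div_mul_eq_div, ← Real.sqrt_div' _ hkR]
  refine Real.sqrt_le_sqrt ?_
  calc ((N : ℝ) - n) / N = ((N - n) / h) / k := by rw [hN, div_div]; push_cast; rfl
    _ ≤ (#{j | d j = 0} / h) / k := by gcongr
    _ ≤ _ := by gcongr

end Blocks

/-- The block example: N = hk, u e_j = e_{⌊j/k⌋}/√k on the l-th block of size k.
Then ‖u‖ = 1, the squared Hilbert–Schmidt norm is h, and for every diagonal
operator Δ of rank at most n one has ‖u(id − Δ)‖ ≥ √((N−n)/N). -/
theorem stmt_18 (h k N : ℕ) (hh : 0 < h) (hk : 0 < k) (hN : N = h * k)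
    (u : EuclideanSpace ℝ (Fin N) →L[ℝ] EuclideanSpace ℝ (Fin N))
    (hu : ∀ j : Fin N, u (EuclideanSpace.single j 1) =
      (1 / Real.sqrt k) • EuclideanSpace.single
        (⟨j.val / k, lt_of_le_of_lt (Nat.div_le_self _ _) j.isLt⟩ : Fin N) 1) :
    ‖u‖ = 1 ∧
    (∑ j : Fin N, ‖u (EuclideanSpace.single j 1)‖ ^ 2 = (h : ℝ)) ∧
    ∀ (n : ℕ) (Δ : EuclideanSpace ℝ (Fin N) →L[ℝ] EuclideanSpace ℝ (Fin N))
      (d : Fin N → ℝ),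
      (∀ (z : EuclideanSpace ℝ (Fin N)) (j : Fin N), Δ z j = d j * z j) →
      {j : Fin N | d j ≠ 0}.ncard ≤ n →
      Real.sqrt (((N : ℝ) - n) / N) ≤
        ‖u.comp (ContinuousLinearMap.id ℝ (EuclideanSpace ℝ (Fin N)) - Δ)‖ := by
  have hu' : ∀ j : Fin N, u (EuclideanSpace.single j 1) =
      (1 / √k) • EuclideanSpace.single (blockIdx k j) 1 := hu
  exact ⟨opNorm_eq_one_of_blockIdx hh hk hN hu', sum_norm_sq_single_of_blockIdx hk hN hu',
    fun _ _ _ hΔ hn => sqrt_le_opNorm_comp_id_sub_diagonal_of_blockIdx hh hk hN hu' hΔ hn⟩
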